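/- Write an element of V_{1,6} as H = X₁P + Y₁Q with P = Σ_{i=0}^{6} C(6,i) α_i X₂^i Y₂^{6−i} and Q = Σ_{i=0}^{6} C(6,i) β_i X₂^i Y₂^{6−i}. Then T^{(1,2)}(H, X₁Y₂² + Y₁X₂²) = 0 if and only if α_i = β_{i+2} for all 0 ≤ i ≤ 4. In particular, the kernel of T^{(1,2)}(•, X₁Y₂² + Y₁X₂²) : V_{1,6} → V_{0,4} has dimension 9. -/

import Mathlib

/-!
In the coordinates `c ↦ ∑ C(n,i) c_i X^i Y^(n-i)`, the derivatives `∂_Y` and `∂_X` of a form of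
degree `n + 1` are `n + 1` times the forms of degree `n` whose coordinates are `c` without its last,
respectively first, entry. Paired with `X₁Y₂² + Y₁X₂²`, the transvectant `T^{(1,2)}(X₁P + Y₁Q, ·)`
is `2(∂_Y²P - ∂_X²Q)`; for `P, Q` of degree `n + 2` with coordinates `α, β` this is `2(n+2)(n+1)`
times the form of degree `n` with coordinates `α_j - β_{j+2}`. As the coordinates identify
`V_{n+2}` with `ℂ^{n+3}`, the kernel on `V_{1,n+2}` is the kernel of the surjection
`(α, β) ↦ (α_j - β_{j+2})_j` from `ℂ^{2n+6}` onto `ℂ^{n+1}`, of dimension `n + 5`.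
-/

set_option synthInstance.maxHeartbeats 1000000
set_option maxHeartbeats 1000000
noncomputable section
open MvPolynomial

/-- The `r`-th transvectant `T^(r) : V_d × V_{d'} → V_{d+d'-2r}` of binary forms (in the
variables `X = X 0`, `Y = X 1`), as a bilinear map:
`T^(r)(P, P') = ∑_{i=0}^{r} (-1)^i C(r,i) (∂^r P/∂X^(r-i)∂Y^i) (∂^r P'/∂X^i ∂Y^(r-i))`. -/
def transvBil (r : ℕ) :
    MvPolynomial (Fin 2) ℂ →ₗ[ℂ] MvPolynomial (Fin 2) ℂ →ₗ[ℂ] MvPolynomial (Fin 2) ℂ :=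
  ∑ i ∈ Finset.range (r + 1),
    ((-1 : ℂ) ^ i * (r.choose i : ℂ)) •
      (LinearMap.mul ℂ (MvPolynomial (Fin 2) ℂ)).compl₁₂
        (((pderiv (0 : Fin 2)).toLinearMap ^ (r - i)) * ((pderiv (1 : Fin 2)).toLinearMap ^ i))
        (((pderiv (0 : Fin 2)).toLinearMap ^ i) * ((pderiv (1 : Fin 2)).toLinearMap ^ (r - i)))

/-- The `(1,s)`-th transvectant `T^{(1,s)} : V_{1,b} × V_{1,b'} → V_{0,b+b'-2s}` for biforms,
where an element `X₁ ⊗ P + Y₁ ⊗ Q` of `V_{1,b} = V_1 ⊗ V_b` is recorded as the pair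
`(P, Q)` of binary forms of degree `b` in `(X₂, Y₂)`:
`T^{(1,s)}((P,Q), (P',Q')) = T^(s)(P, Q') - T^(s)(Q, P')`. -/
def transv1 (s : ℕ) :
    (MvPolynomial (Fin 2) ℂ × MvPolynomial (Fin 2) ℂ) →ₗ[ℂ]
      (MvPolynomial (Fin 2) ℂ × MvPolynomial (Fin 2) ℂ) →ₗ[ℂ] MvPolynomial (Fin 2) ℂ :=
  (transvBil s).compl₁₂ (LinearMap.fst ℂ _ _) (LinearMap.snd ℂ _ _) -
    (transvBil s).compl₁₂ (LinearMap.snd ℂ _ _) (LinearMap.fst ℂ _ _)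

/-- The degree-6 binary form `∑_{i=0}^{6} C(6,i) α_i X₂^i Y₂^(6-i)`. -/
def formOf (α : Fin 7 → ℂ) : MvPolynomial (Fin 2) ℂ :=
  ∑ i : Fin 7, C ((Nat.choose 6 (i : ℕ) : ℂ) * α i) * X 0 ^ (i : ℕ) * X 1 ^ (6 - (i : ℕ))

section BinaryForm

variable {R : Type*} [CommSemiring R]

def binaryExponent (n : ℕ) (i : Fin (n + 1)) : Fin 2 →₀ ℕ :=
  Finsupp.single 0 (i : ℕ) + Finsupp.single 1 (n - i : ℕ)

lemma binaryExponent_apply_zero (n : ℕ) (i : Fin (n + 1)) : binaryExponent n i 0 = i := by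
  simp [binaryExponent]

lemma binaryExponent_apply_one (n : ℕ) (i : Fin (n + 1)) : binaryExponent n i 1 = n - i := by
  simp [binaryExponent]

lemma binaryExponent_injective (n : ℕ) : Function.Injective (binaryExponent n) := fun i j h =>
  Fin.ext <| by simpa only [binaryExponent_apply_zero] using DFunLike.congr_fun h 0

lemma degree_binaryExponent (n : ℕ) (i : Fin (n + 1)) : (binaryExponent n i).degree = n := by
  rw [binaryExponent, map_add, Finsupp.degree_single, Finsupp.degree_single]
  omega

def binomialMonomial (n : ℕ) (i : Fin (n + 1)) : MvPolynomial (Fin 2) R :=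
  monomial (binaryExponent n i) (n.choose i : R)

variable (R) in
def binaryForm (n : ℕ) : (Fin (n + 1) → R) →ₗ[R] MvPolynomial (Fin 2) R :=
  Fintype.linearCombination R (binomialMonomial n)

lemma binaryForm_apply (n : ℕ) (c : Fin (n + 1) → R) :
    binaryForm R n c = ∑ i, monomial (binaryExponent n i) (c i * n.choose i) := by
  simp only [binaryForm, Fintype.linearCombination_apply, binomialMonomial, smul_monomial,
    smul_eq_mul]

lemma pderiv_one_binomialMonomial_castSucc (n : ℕ) (i : Fin (n + 1)) :
    pderiv 1 (binomialMonomial (n + 1) i.castSucc : MvPolynomial (Fin 2) R) =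
      (n + 1 : R) • binomialMonomial n i := by
  have hexp : binaryExponent (n + 1) i.castSucc - Finsupp.single 1 1 = binaryExponent n i := by
    ext k
    fin_cases k <;> simp [binaryExponent, Nat.sub_sub]
  have hcoeff : ((n + 1).choose i * (n + 1 - i : ℕ) : R) = (n + 1) * n.choose i := by
    rw [← Nat.cast_mul, ← Nat.choose_mul_succ_eq]
    push_cast
    ring
  rw [binomialMonomial, pderiv_monomial, hexp, binaryExponent_apply_one, Fin.val_castSucc, hcoeff,
    binomialMonomial, smul_monomial, smul_eq_mul]

lemma pderiv_one_binomialMonomial_last (n : ℕ) :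
    pderiv 1 (binomialMonomial n (Fin.last n) : MvPolynomial (Fin 2) R) = 0 := by
  simp [binomialMonomial, pderiv_monomial, binaryExponent_apply_one]

lemma pderiv_zero_binomialMonomial_succ (n : ℕ) (i : Fin (n + 1)) :
    pderiv 0 (binomialMonomial (n + 1) i.succ : MvPolynomial (Fin 2) R) =
      (n + 1 : R) • binomialMonomial n i := by
  have hexp : binaryExponent (n + 1) i.succ - Finsupp.single 0 1 = binaryExponent n i := by
    ext k
    fin_cases k <;> simp [binaryExponent]
  have hcoeff : ((n + 1).choose (i + 1) * (i + 1 : ℕ) : R) = (n + 1) * n.choose i := by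
    rw [← Nat.cast_mul, ← Nat.add_one_mul_choose_eq]
    push_cast
    ring
  rw [binomialMonomial, pderiv_monomial, hexp, binaryExponent_apply_zero, Fin.val_succ, hcoeff,
    binomialMonomial, smul_monomial, smul_eq_mul]

lemma pderiv_zero_binomialMonomial_zero (n : ℕ) :
    pderiv 0 (binomialMonomial n 0 : MvPolynomial (Fin 2) R) = 0 := by
  simp [binomialMonomial, pderiv_monomial, binaryExponent_apply_zero]

lemma pderiv_one_binaryForm (n : ℕ) (c : Fin (n + 2) → R) :
    pderiv 1 (binaryForm R (n + 1) c) = (n + 1 : R) • binaryForm R n (fun i => c i.castSucc) := by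
  rw [binaryForm, Fintype.linearCombination_apply, Fin.sum_univ_castSucc, map_add,
    Derivation.map_smul, pderiv_one_binomialMonomial_last, smul_zero, add_zero, map_sum, binaryForm,
    Fintype.linearCombination_apply, Finset.smul_sum]
  refine Finset.sum_congr rfl fun i _ => ?_
  rw [Derivation.map_smul, pderiv_one_binomialMonomial_castSucc, smul_comm]

lemma pderiv_zero_binaryForm (n : ℕ) (c : Fin (n + 2) → R) :
    pderiv 0 (binaryForm R (n + 1) c) = (n + 1 : R) • binaryForm R n (fun i => c i.succ) := by
  rw [binaryForm, Fintype.linearCombination_apply, Fin.sum_univ_succ, map_add,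
    Derivation.map_smul, pderiv_zero_binomialMonomial_zero, smul_zero, zero_add, map_sum,
    binaryForm, Fintype.linearCombination_apply, Finset.smul_sum]
  refine Finset.sum_congr rfl fun i _ => ?_
  rw [Derivation.map_smul, pderiv_zero_binomialMonomial_succ, smul_comm]

lemma binaryForm_mem_homogeneousSubmodule (n : ℕ) (c : Fin (n + 1) → R) :
    binaryForm R n c ∈ homogeneousSubmodule (Fin 2) R n := by
  rw [binaryForm_apply]
  exact Submodule.sum_mem _ fun i _ => isHomogeneous_monomial _ (degree_binaryExponent n i)

lemma coeff_binaryForm (n : ℕ) (c : Fin (n + 1) → R) (i : Fin (n + 1)) :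
    coeff (binaryExponent n i) (binaryForm R n c) = c i * n.choose i := by
  simp [binaryForm_apply, coeff_sum, coeff_monomial, (binaryExponent_injective n).eq_iff]

end BinaryForm

section Field

variable {K : Type*} [Field K] [CharZero K]

lemma cast_choose_ne_zero (n : ℕ) (i : Fin (n + 1)) : (n.choose i : K) ≠ 0 :=
  Nat.cast_ne_zero.mpr (Nat.choose_pos (Fin.is_le i)).ne'

lemma binaryForm_injective (n : ℕ) : Function.Injective (binaryForm K n) := fun c c' h =>
  funext fun i => mul_right_cancel₀ (cast_choose_ne_zero n i) <| by
    rw [← coeff_binaryForm, ← coeff_binaryForm, h]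

lemma range_binaryForm (n : ℕ) :
    LinearMap.range (binaryForm K n) = homogeneousSubmodule (Fin 2) K n := by
  refine le_antisymm (LinearMap.range_le_iff_comap.mpr ?_) ?_
  · exact Submodule.eq_top_iff'.mpr (binaryForm_mem_homogeneousSubmodule n)
  rw [homogeneousSubmodule_eq_finsupp_supported, AddMonoidAlgebra.supported_eq_span_single,
    Submodule.span_le]
  rintro _ ⟨d, hd, rfl⟩
  have hdeg : d 0 + d 1 = n := by simpa [Finsupp.degree_eq_sum, Fin.sum_univ_two] using hd
  set i : Fin (n + 1) := ⟨d 0, by omega⟩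
  have hdi : d = binaryExponent n i := by
    ext k
    fin_cases k <;> simp [binaryExponent, i, ← hdeg]
  refine ⟨Pi.single i (n.choose i : K)⁻¹, ?_⟩
  rw [binaryForm, Fintype.linearCombination_apply_single, binomialMonomial, smul_monomial,
    smul_eq_mul, inv_mul_cancel₀ (cast_choose_ne_zero n i), hdi]
  exact (single_eq_monomial _ _).symm

end Field

lemma formOf_eq_binaryForm (α : Fin 7 → ℂ) : formOf α = binaryForm ℂ 6 α := by
  rw [formOf, binaryForm_apply]
  refine Finset.sum_congr rfl fun i _ => ?_
  rw [mul_assoc, X_pow_eq_monomial, X_pow_eq_monomial, monomial_mul, C_mul_monomial]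
  simp only [mul_one, mul_comm (α i), binaryExponent]

section ShiftSub

variable {K : Type*} [Field K]

def shiftSub (n : ℕ) : ((Fin (n + 3) → K) × (Fin (n + 3) → K)) →ₗ[K] (Fin (n + 1) → K) :=
  LinearMap.funLeft K K (Fin.castSucc ∘ Fin.castSucc) ∘ₗ LinearMap.fst K _ _ -
    LinearMap.funLeft K K (Fin.succ ∘ Fin.succ) ∘ₗ LinearMap.snd K _ _

lemma shiftSub_apply (n : ℕ) (α β : Fin (n + 3) → K) :
    shiftSub n (α, β) = (fun j => α j.castSucc.castSucc) - fun j => β j.succ.succ :=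
  rfl

lemma shiftSub_eq_zero_iff (n : ℕ) (α β : Fin (n + 3) → K) :
    shiftSub n (α, β) = 0 ↔ ∀ j : Fin (n + 1), α j.castSucc.castSucc = β j.succ.succ := by
  simp [shiftSub_apply, funext_iff, sub_eq_zero]

lemma shiftSub_surjective (n : ℕ) : Function.Surjective (shiftSub (K := K) n) := fun γ =>
  ⟨(Fin.snoc (Fin.snoc γ 0) 0, 0), funext fun j => by simp [shiftSub_apply]⟩

lemma finrank_ker_shiftSub (n : ℕ) :
    Module.finrank K (LinearMap.ker (shiftSub (K := K) n)) = n + 5 := by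
  have h := (shiftSub (K := K) n).finrank_range_add_finrank_ker
  rw [LinearMap.range_eq_top.mpr (shiftSub_surjective n), finrank_top] at h
  simp only [Module.finrank_prod, Module.finrank_fin_fun] at h
  omega

end ShiftSub

lemma LinearMap.finrank_range_inf_ker {K V W U : Type*} [DivisionRing K] [AddCommGroup V]
    [Module K V] [AddCommGroup W] [Module K W] [AddCommGroup U] [Module K U]
    {B : V →ₗ[K] W} (hB : Function.Injective B) (T : W →ₗ[K] U) :
    Module.finrank K ↥(LinearMap.range B ⊓ LinearMap.ker T) =
      Module.finrank K ↥(LinearMap.ker (T ∘ₗ B)) := by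
  rw [← Submodule.map_comap_eq, ← LinearMap.ker_comp]
  exact (Submodule.equivMapOfInjective B hB _).finrank_eq.symm

section PderivXSq

variable {R : Type*} [CommSemiring R]

lemma pderiv_ofNat (i : Fin 2) (k : ℕ) [k.AtLeastTwo] :
    pderiv i (ofNat(k) : MvPolynomial (Fin 2) R) = 0 :=
  Derivation.map_natCast _ k

lemma pderiv_pderiv_X_sq (i : Fin 2) :
    pderiv i (pderiv i (X i ^ 2 : MvPolynomial (Fin 2) R)) = 2 := by
  simp [pderiv_ofNat]

lemma pderiv_X_sq_of_ne {i j : Fin 2} (h : i ≠ j) :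
    pderiv i (X j ^ 2 : MvPolynomial (Fin 2) R) = 0 := by
  simp [h]

lemma pderiv_pderiv_X_sq_of_ne {i j : Fin 2} (h : i ≠ j) :
    pderiv i (pderiv j (X j ^ 2 : MvPolynomial (Fin 2) R)) = 0 := by
  simp [h, pderiv_ofNat]

end PderivXSq

lemma transvBil_two_apply (p p' : MvPolynomial (Fin 2) ℂ) :
    transvBil 2 p p' = pderiv 0 (pderiv 0 p) * pderiv 1 (pderiv 1 p') -
      (2 : ℂ) • (pderiv 0 (pderiv 1 p) * pderiv 0 (pderiv 1 p')) +
      pderiv 1 (pderiv 1 p) * pderiv 0 (pderiv 0 p') := by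
  simp [transvBil, Finset.sum_range_succ, pow_succ, Module.End.mul_apply, sub_eq_add_neg]

lemma transv1_two_apply_X_sq (p q : MvPolynomial (Fin 2) ℂ) :
    transv1 2 (p, q) (X 1 ^ 2, X 0 ^ 2) =
      (2 : ℂ) • (pderiv 1 (pderiv 1 p) - pderiv 0 (pderiv 0 q)) := by
  simp only [transv1, LinearMap.sub_apply, LinearMap.compl₁₂_apply, LinearMap.fst_apply,
    LinearMap.snd_apply, transvBil_two_apply, pderiv_pderiv_X_sq,
    pderiv_X_sq_of_ne (R := ℂ) zero_ne_one, pderiv_X_sq_of_ne (R := ℂ) one_ne_zero,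
    pderiv_pderiv_X_sq_of_ne (R := ℂ) zero_ne_one, map_zero, mul_zero, smul_zero, sub_zero,
    zero_add, two_smul]
  ring

lemma transv1_binaryForm (n : ℕ) (α β : Fin (n + 3) → ℂ) :
    transv1 2 (binaryForm ℂ (n + 2) α, binaryForm ℂ (n + 2) β) (X 1 ^ 2, X 0 ^ 2) =
      (2 * (n + 2) * (n + 1) : ℂ) • binaryForm ℂ n (shiftSub n (α, β)) := by
  rw [transv1_two_apply_X_sq, pderiv_one_binaryForm, Derivation.map_smul, pderiv_one_binaryForm,
    pderiv_zero_binaryForm, Derivation.map_smul, pderiv_zero_binaryForm, shiftSub_apply, map_sub]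
  push_cast
  module

lemma transv1_flip_comp_prodMap_binaryForm (n : ℕ) :
    (transv1 2).flip (X 1 ^ 2, X 0 ^ 2) ∘ₗ (binaryForm ℂ (n + 2)).prodMap (binaryForm ℂ (n + 2)) =
      (2 * (n + 2) * (n + 1) : ℂ) • (binaryForm ℂ n ∘ₗ shiftSub n) :=
  LinearMap.ext fun x => transv1_binaryForm n x.1 x.2

lemma finrank_homogeneousSubmodule_prod_inf_ker_transv1 (n : ℕ) :
    Module.finrank ℂ
      ↥((homogeneousSubmodule (Fin 2) ℂ (n + 2)).prod (homogeneousSubmodule (Fin 2) ℂ (n + 2)) ⊓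
        LinearMap.ker ((transv1 2).flip (X 1 ^ 2, X 0 ^ 2))) = n + 5 := by
  have hB : Function.Injective ((binaryForm ℂ (n + 2)).prodMap (binaryForm ℂ (n + 2))) :=
    (binaryForm_injective _).prodMap (binaryForm_injective _)
  rw [← range_binaryForm, ← LinearMap.range_prodMap, LinearMap.finrank_range_inf_ker hB,
    transv1_flip_comp_prodMap_binaryForm, LinearMap.ker_smul _ _ (by norm_cast),
    LinearMap.ker_comp_of_ker_eq_bot _ (LinearMap.ker_eq_bot.mpr (binaryForm_injective n)),
    finrank_ker_shiftSub]

/-- **The kernel of `T^{(1,2)}(•, X₁Y₂² + Y₁X₂²) : V_{1,6} → V_{0,4}`.**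
Writing `H = X₁P + Y₁Q` with `P = ∑ C(6,i) α_i X₂^i Y₂^(6-i)`, `Q = ∑ C(6,i) β_i X₂^i Y₂^(6-i)`,
one has `T^{(1,2)}(H, X₁Y₂² + Y₁X₂²) = 0` iff `α_i = β_{i+2}` for `0 ≤ i ≤ 4`; in particular
the kernel has dimension 9. -/
theorem transvectant_16_kernel :
    (∀ α β : Fin 7 → ℂ,
      (transv1 2 (formOf α, formOf β) (X 1 ^ 2, X 0 ^ 2) = 0 ↔
        ∀ (i : ℕ) (h : i ≤ 4), α ⟨i, by omega⟩ = β ⟨i + 2, by omega⟩)) ∧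
    Module.finrank ℂ
      ↥((homogeneousSubmodule (Fin 2) ℂ 6).prod (homogeneousSubmodule (Fin 2) ℂ 6) ⊓
        LinearMap.ker ((transv1 2).flip (X 1 ^ 2, X 0 ^ 2))) = 9 := by
  refine ⟨fun α β => ?_, finrank_homogeneousSubmodule_prod_inf_ker_transv1 4⟩
  rw [formOf_eq_binaryForm, formOf_eq_binaryForm, transv1_binaryForm 4, smul_eq_zero_iff_right
    (by norm_num), map_eq_zero_iff _ (binaryForm_injective 4), shiftSub_eq_zero_iff, Fin.forall_iff]
  simp [Nat.lt_succ_iff]
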